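/- For every real number k ≥ 1, the inequalities 1 > (ln(k+2) − ln 2)/(k·(ln π − ln 2)) > 12/(5(k+2)) hold. -/
import Mathlib


open Real

lemma log32_gt : Real.log 3 - Real.log 2 > 2/5 := by
  have h : Real.log 3 - Real.log 2 = Real.log (3/2) := by
    rw [Real.log_div (by norm_num) (by norm_num)]
  rw [h, gt_iff_lt, Real.lt_log_iff_exp_lt (by norm_num)]
  by_contra hcon
  push_neg at hcon
  have h5 : ((3:ℝ)/2)^5 ≤ Real.exp (2/5) ^ 5 :=
    pow_le_pow_left₀ (by norm_num) hcon 5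
  have he : Real.exp (2/5) ^ 5 = Real.exp 2 := by
    rw [← Real.exp_nat_mul]; norm_num
  have he2 : Real.exp 2 = Real.exp 1 ^ 2 := by
    rw [← Real.exp_nat_mul]; norm_num
  have hub : Real.exp 1 < 2.7182818286 := Real.exp_one_lt_d9
  have hpos : (0:ℝ) < Real.exp 1 := Real.exp_pos 1
  nlinarith [h5, he, he2]

lemma logpi2_lt : Real.log π - Real.log 2 < 1/2 := by
  have hpi : (0:ℝ) < π := Real.pi_pos
  have h : Real.log π - Real.log 2 = Real.log (π/2) := by
    rw [Real.log_div (ne_of_gt hpi) (by norm_num)]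
  rw [h, Real.log_lt_iff_lt_exp (by positivity)]
  have hsq : Real.exp (1/2) ^ 2 = Real.exp 1 := by
    rw [← Real.exp_nat_mul]; norm_num
  have hlb : (2.7182818283:ℝ) < Real.exp 1 := Real.exp_one_gt_d9
  have hpilt : π < 3.15 := by linarith [Real.pi_lt_d2]
  have hep : (0:ℝ) < Real.exp (1/2) := Real.exp_pos _
  nlinarith [hsq, hlb, hpilt, hep, hpi]

theorem log_ratio_bounds (k : ℝ) (hk : 1 ≤ k) :
    1 > (Real.log (k + 2) - Real.log 2) / (k * (Real.log π - Real.log 2)) ∧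
    (Real.log (k + 2) - Real.log 2) / (k * (Real.log π - Real.log 2)) >
      12 / (5 * (k + 2)) := by
  have hpi : (0:ℝ) < π := Real.pi_pos
  have hk0 : (0:ℝ) < k := by linarith
  have hk2 : (0:ℝ) < k + 2 := by linarith
  have hL : Real.log 3 - Real.log 2 > 2/5 := log32_gt
  have hc : Real.log π - Real.log 2 < 1/2 := logpi2_lt
  have hLc : Real.log 3 - Real.log 2 < Real.log π - Real.log 2 := by
    have : Real.log 3 < Real.log π :=
      Real.log_lt_log (by norm_num) Real.pi_gt_three
    linarith
  have hcpos : (0:ℝ) < Real.log π - Real.log 2 := by linarith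
  have hden : (0:ℝ) < k * (Real.log π - Real.log 2) := by positivity
  -- upper bound on log(k+2) - log 3
  have hub : Real.log (k+2) - Real.log 3 ≤ (k - 1)/3 := by
    have h1 : Real.log ((k+2)/3) ≤ (k+2)/3 - 1 :=
      Real.log_le_sub_one_of_pos (by positivity)
    rw [Real.log_div (ne_of_gt hk2) (by norm_num)] at h1
    linarith
  -- lower bound on log(k+2) - log 3
  have hlb : (k - 1)/(k + 2) ≤ Real.log (k+2) - Real.log 3 := by
    have h1 : Real.log (3/(k+2)) ≤ 3/(k+2) - 1 :=
      Real.log_le_sub_one_of_pos (by positivity)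
    rw [Real.log_div (by norm_num) (ne_of_gt hk2)] at h1
    have h2 : 3/(k+2) - 1 = -((k-1)/(k+2)) := by field_simp; ring
    rw [h2] at h1
    linarith
  constructor
  · rw [gt_iff_lt, div_lt_one hden]
    -- log(k+2) - log 2 ≤ (log 3 - log 2) + (k-1)/3 < k * c
    have h1 : Real.log (k+2) - Real.log 2 ≤ (Real.log 3 - Real.log 2) + (k-1)/3 := by
      linarith
    nlinarith [h1, hLc, hL, hk]
  · rw [gt_iff_lt, div_lt_div_iff₀ (by positivity) hden]
    -- need 12 * (k*c) < (log(k+2)-log2) * (5*(k+2))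
    have h1 : (Real.log 3 - Real.log 2) + (k-1)/(k+2) ≤ Real.log (k+2) - Real.log 2 := by
      linarith
    have h2 : 5*(k+2)*((Real.log 3 - Real.log 2) + (k-1)/(k+2)) ≤
        (Real.log (k+2) - Real.log 2) * (5*(k+2)) := by
      nlinarith [h1, hk2]
    have h3 : 5*(k+2)*((Real.log 3 - Real.log 2) + (k-1)/(k+2)) =
        5*(k+2)*(Real.log 3 - Real.log 2) + 5*(k-1) := by
      field_simp
    nlinarith [h2, h3, hL, hc, hk]
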